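/- For full-column-rank M ∈ ℝ^{k×d}, the least-squares estimator under the mechanism e = Mx + N(0, σ²I_k) attains MSE σ² trace((MᵀM)⁻¹)/d ≥ 1/dFIL, with equality if and only if all eigenvalues of MᵀM are equal. -/

import Mathlib

/-!
Diagonalising `A = MᵀM` turns both traces into sums over its eigenvalues `λᵢ`, which are
positive because `M` has full column rank. The claim becomes the arithmetic–harmonic mean
inequality `d² ≤ (∑ λᵢ)(∑ λᵢ⁻¹)`, and the identity
`(∑ λᵢ)(∑ λᵢ⁻¹) - d² = ½ ∑ᵢ ∑ⱼ (λᵢ - λⱼ)² / (λᵢ λⱼ)`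
exhibits both the inequality and its equality case.
-/

open Finset Matrix

namespace Finset

variable {ι : Type*} (s : Finset ι) {f : ι → ℝ}

theorem sum_mul_sum_inv_sub_card_sq (hf : ∀ i ∈ s, f i ≠ 0) :
    (∑ i ∈ s, f i) * (∑ i ∈ s, (f i)⁻¹) - (#s : ℝ) ^ 2 =
      (∑ i ∈ s, ∑ j ∈ s, (f i - f j) ^ 2 / (f i * f j)) / 2 := by
  have hterm : ∀ i ∈ s, ∀ j ∈ s,
      (f i - f j) ^ 2 / (f i * f j) = f i * (f j)⁻¹ + f j * (f i)⁻¹ - 2 := by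
    intro i hi j hj
    field_simp [hf i hi, hf j hj]
    ring
  simp_rw [sum_congr rfl fun i hi ↦ sum_congr rfl (hterm i hi), sum_sub_distrib,
    sum_add_distrib, ← sum_mul_sum]
  rw [sum_comm (f := fun i j ↦ f j * (f i)⁻¹), ← sum_mul_sum]
  simp only [sum_const, nsmul_eq_mul]
  ring

variable {s}

theorem card_sq_le_sum_mul_sum_inv (hf : ∀ i ∈ s, 0 < f i) :
    (#s : ℝ) ^ 2 ≤ (∑ i ∈ s, f i) * (∑ i ∈ s, (f i)⁻¹) := by
  rw [← sub_nonneg, sum_mul_sum_inv_sub_card_sq s fun i hi ↦ (hf i hi).ne']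
  exact div_nonneg (sum_nonneg fun i hi ↦ sum_nonneg fun j hj ↦
    div_nonneg (sq_nonneg _) (mul_pos (hf i hi) (hf j hj)).le) zero_le_two

theorem sum_mul_sum_inv_eq_card_sq_iff (hf : ∀ i ∈ s, 0 < f i) :
    (∑ i ∈ s, f i) * (∑ i ∈ s, (f i)⁻¹) = (#s : ℝ) ^ 2 ↔
      ∀ i ∈ s, ∀ j ∈ s, f i = f j := by
  have hprod : ∀ i ∈ s, ∀ j ∈ s, 0 < f i * f j := fun i hi j hj ↦
    mul_pos (hf i hi) (hf j hj)
  have hterm : ∀ i ∈ s, ∀ j ∈ s, 0 ≤ (f i - f j) ^ 2 / (f i * f j) := fun i hi j hj ↦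
    div_nonneg (sq_nonneg _) (hprod i hi j hj).le
  rw [← sub_eq_zero, sum_mul_sum_inv_sub_card_sq s fun i hi ↦ (hf i hi).ne',
    div_eq_zero_iff, or_iff_left two_ne_zero,
    sum_eq_zero_iff_of_nonneg fun i hi ↦ sum_nonneg (hterm i hi)]
  refine forall₂_congr fun i hi ↦ ?_
  rw [sum_eq_zero_iff_of_nonneg (hterm i hi)]
  refine forall₂_congr fun j hj ↦ ?_
  rw [div_eq_zero_iff, or_iff_left (hprod i hi j hj).ne', pow_eq_zero_iff two_ne_zero, sub_eq_zero]

end Finset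

namespace Matrix

theorem mulVec_injective_of_rank_eq_card {m n K : Type*} [Fintype n] [Field K]
    (M : Matrix m n K) (h : M.rank = Fintype.card n) : Function.Injective M.mulVec := by
  rw [mulVec_injective_iff, linearIndependent_iff_card_eq_finrank_span, Set.finrank,
    ← rank_eq_finrank_span_cols, h]

namespace IsHermitian

variable {n 𝕜 : Type*} [Fintype n] [DecidableEq n] [RCLike 𝕜] {A : Matrix n n 𝕜}

theorem trace_cfc (hA : A.IsHermitian) (f : ℝ → ℝ) :
    (cfc f A).trace = ∑ i, (f (hA.eigenvalues i) : 𝕜) := by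
  rw [hA.cfc_eq, IsHermitian.cfc, Unitary.conjStarAlgAut_apply, trace_mul_cycle]
  simp

theorem trace_inv (hA : A.IsHermitian) (hunit : IsUnit A) :
    A⁻¹.trace = ∑ i, (hA.eigenvalues i : 𝕜)⁻¹ := by
  have hinv : cfc (·⁻¹ : ℝ → ℝ) A = A⁻¹ := by
    conv_lhs => rw [← hunit.unit_spec]
    rw [cfc_inv_id hunit.unit (by rw [hunit.unit_spec]; exact hA.isSelfAdjoint), coe_units_inv,
      hunit.unit_spec]
  simp [← hinv, hA.trace_cfc]

end IsHermitian

end Matrix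

theorem least_squares_mse_ge_inv_dfil_general
    (d k : ℕ) (σ : ℝ) (hσ : 0 < σ)
    (M : Matrix (Fin k) (Fin d) ℝ) (hrank : M.rank = d)
    (hA : (M.transpose * M).IsHermitian) :
    σ ^ 2 * (M.transpose * M)⁻¹.trace / d ≥
      1 / ((M.transpose * M).trace / (d * σ ^ 2)) ∧
    (σ ^ 2 * (M.transpose * M)⁻¹.trace / d =
        1 / ((M.transpose * M).trace / (d * σ ^ 2)) ↔
      ∀ i j, hA.eigenvalues i = hA.eigenvalues j) := by
  obtain rfl | hd := Nat.eq_zero_or_pos d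
  · simp
  have hposDef : (M.transpose * M).PosDef := by
    simpa using PosDef.conjTranspose_mul_self M
      (M.mulVec_injective_of_rank_eq_card (by simpa using hrank))
  have heig_pos : ∀ i ∈ univ, 0 < hA.eigenvalues i := fun i _ ↦ hposDef.eigenvalues_pos i
  set S := ∑ i, hA.eigenvalues i
  set S' := ∑ i, (hA.eigenvalues i)⁻¹
  have htrace : (M.transpose * M).trace = S := by simpa using hA.trace_eq_sum_eigenvalues
  have htrace_inv : (M.transpose * M)⁻¹.trace = S' := by simpa using hA.trace_inv hposDef.isUnit
  have hS_pos : 0 < S := sum_pos heig_pos ⟨⟨0, hd⟩, mem_univ _⟩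
  have hgap : σ ^ 2 * (M.transpose * M)⁻¹.trace / d -
        1 / ((M.transpose * M).trace / (d * σ ^ 2)) =
      σ ^ 2 / (d * S) * (S * S' - (#(univ : Finset (Fin d)) : ℝ) ^ 2) := by
    rw [htrace, htrace_inv, card_univ, Fintype.card_fin]
    field_simp
  have hfactor_pos : 0 < σ ^ 2 / (d * S) := by positivity
  constructor
  · rw [ge_iff_le, ← sub_nonneg, hgap]
    exact mul_nonneg hfactor_pos.le (sub_nonneg.2 (card_sq_le_sum_mul_sum_inv heig_pos))
  · rw [← sub_eq_zero, hgap, mul_eq_zero, or_iff_right hfactor_pos.ne', sub_eq_zero,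
      sum_mul_sum_inv_eq_card_sq_iff heig_pos]
    simp

/-- For full-column-rank `M ∈ ℝ^{k×d}`, the least-squares estimator under the mechanism
`e = Mx + N(0, σ²I_k)` attains MSE `σ² trace((MᵀM)⁻¹)/d ≥ 1/dFIL` where
`dFIL = trace(MᵀM)/(d σ²)`, with equality iff all eigenvalues of `MᵀM` are equal. -/
theorem least_squares_mse_ge_inv_dfil
    (d k : ℕ) (hd : 0 < d) (σ : ℝ) (hσ : 0 < σ)
    (M : Matrix (Fin k) (Fin d) ℝ) (hrank : M.rank = d)
    (hA : (M.transpose * M).IsHermitian) :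
    σ ^ 2 * (M.transpose * M)⁻¹.trace / d ≥
      1 / ((M.transpose * M).trace / (d * σ ^ 2)) ∧
    (σ ^ 2 * (M.transpose * M)⁻¹.trace / d =
        1 / ((M.transpose * M).trace / (d * σ ^ 2)) ↔
      ∀ i j, hA.eigenvalues i = hA.eigenvalues j) :=
  least_squares_mse_ge_inv_dfil_general d k σ hσ M hrank hA
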